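/- arXiv:quant-ph/0201117 — 2 statements merged into one kernel-verified Lean document; each statement's English description precedes it below -/
import Mathlib

section
/- Let f : F_2^n → F_2 and let k be the minimum number such that there exist linearly independent z_1, …, z_k ∈ F_2^n with f constant on each set D_c = {x : x·z_j = c_j ∀j}, c ∈ F_2^k. Then f has a nonzero period s (i.e., ∃ s ≠ 0 with f(x) = f(x ⊕ s) for all x) if and only if k < n. -/
private def dotL (n : ℕ) (s : Fin n → ZMod 2) : (Fin n → ZMod 2) →ₗ[ZMod 2] ZMod 2 where
  toFun v := ∑ i, v i * s i
  map_add' x y := by simp [add_mul, Finset.sum_add_distrib]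
  map_smul' c x := by simp [Finset.mul_sum, mul_assoc]

private lemma dotL_single (n : ℕ) (s : Fin n → ZMod 2) (i : Fin n) :
    dotL n s (Pi.single i 1) = s i := by
  simp only [dotL, LinearMap.coe_mk, AddHom.coe_mk]
  rw [Finset.sum_eq_single i]
  · simp
  · intro b _ hb; simp [Pi.single_apply, hb]
  · simp

private lemma two_ne : ∀ a : ZMod 2, a ≠ 0 → a = 1 := by decide

/-- Let `k` be the minimum number such that there exist linearly independent
`z_1, …, z_k ∈ F_2^n` with `f` constant on each set `D_c = {x : x · z_j = c_j ∀ j}`.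
Then `f` has a nonzero period `s` if and only if `k < n`. -/
theorem period_iff_min_lt (n : ℕ) (f : (Fin n → ZMod 2) → Bool) (k : ℕ)
    (hk : IsLeast {m : ℕ | ∃ z : Fin m → (Fin n → ZMod 2),
        LinearIndependent (ZMod 2) z ∧
        ∀ x x' : Fin n → ZMod 2,
          (∀ j, ∑ i, x i * z j i = ∑ i, x' i * z j i) → f x = f x'} k) :
    (∃ s : Fin n → ZMod 2, s ≠ 0 ∧ ∀ x, f x = f (x + s)) ↔ k < n := by
  constructor
  · rintro ⟨s, hs, hper⟩
    have hn : 1 ≤ n := by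
      by_contra h
      push_neg at h
      interval_cases n
      exact hs (funext fun i => i.elim0)
    set φ := dotL n s with hφ
    have hφne : φ ≠ 0 := by
      intro h
      apply hs
      funext i
      have := dotL_single n s i
      rw [← hφ, h] at this
      simpa using this.symm
    have hrange : LinearMap.range φ = ⊤ := by
      obtain ⟨v0, hv0⟩ : ∃ v0, φ v0 ≠ 0 := by
        by_contra h; push_neg at h
        exact hφne (LinearMap.ext fun v => by simp [h v])
      rw [LinearMap.range_eq_top]
      intro c
      rcases (by decide : ∀ a : ZMod 2, a = 0 ∨ a = 1) c with h | h
      · exact ⟨0, by simp [h]⟩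
      · exact ⟨v0, by rw [two_ne _ hv0, h]⟩
    have hker : Module.finrank (ZMod 2) (LinearMap.ker φ) = n - 1 := by
      have h1 := LinearMap.finrank_range_add_finrank_ker φ
      rw [hrange] at h1
      simp [Module.finrank_fintype_fun_eq_card] at h1
      omega
    let b : Module.Basis (Fin (n - 1)) (ZMod 2) (LinearMap.ker φ) :=
      Module.finBasisOfFinrankEq (ZMod 2) (LinearMap.ker φ) hker
    let z : Fin (n - 1) → (Fin n → ZMod 2) := fun j => (b j : Fin n → ZMod 2)
    have hspan : Submodule.span (ZMod 2) (Set.range z) = LinearMap.ker φ := by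
      have h1 : Submodule.map (LinearMap.ker φ).subtype
            (Submodule.span (ZMod 2) (Set.range b)) =
          Submodule.map (LinearMap.ker φ).subtype ⊤ := by rw [b.span_eq]
      rw [Submodule.map_span, Submodule.map_top, Submodule.range_subtype] at h1
      rw [← h1]
      congr 1
      rw [← Set.range_comp]
      rfl
    have hmem : (n - 1) ∈ {m : ℕ | ∃ z : Fin m → (Fin n → ZMod 2),
        LinearIndependent (ZMod 2) z ∧
        ∀ x x' : Fin n → ZMod 2,
          (∀ j, ∑ i, x i * z j i = ∑ i, x' i * z j i) → f x = f x'} := by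
      refine ⟨z, ?_, ?_⟩
      · exact b.linearIndependent.map' (LinearMap.ker φ).subtype (Submodule.ker_subtype _)
      · intro x x' hxx'
        set d : Fin n → ZMod 2 := x - x' with hd
        set ψ := dotL n d with hψ
        have hψz : ∀ j, ψ (z j) = 0 := by
          intro j
          have h0 : ∑ i, (x - x') i * z j i = 0 := by
            simp only [Pi.sub_apply, sub_mul, Finset.sum_sub_distrib]
            rw [hxx' j]; ring
          rw [hψ]
          show ∑ i, z j i * d i = 0
          rw [← h0]
          exact Finset.sum_congr rfl fun i _ => mul_comm _ _
        have hle : LinearMap.ker φ ≤ LinearMap.ker ψ := by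
          rw [← hspan, Submodule.span_le]
          rintro _ ⟨j, rfl⟩
          exact LinearMap.mem_ker.mpr (hψz j)
        have hvanish : ∀ w, φ w = 0 → ψ w = 0 := fun w hw =>
          LinearMap.mem_ker.mp (hle (LinearMap.mem_ker.mpr hw))
        by_cases hψ0 : ψ = 0
        · have hd0 : d = 0 := by
            funext i
            have := dotL_single n d i
            rw [← hψ, hψ0] at this
            simpa using this.symm
          have : x = x' := sub_eq_zero.mp (by rw [← hd]; exact hd0)
          rw [this]
        · have hψφ : ∀ v, ψ v = φ v := by
            obtain ⟨v0, hv0⟩ : ∃ v0, ψ v0 ≠ 0 := by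
              by_contra h; push_neg at h
              exact hψ0 (LinearMap.ext fun v => by simp [h v])
            have hψv0 : ψ v0 = 1 := two_ne _ hv0
            have hφv0 : φ v0 = 1 := by
              apply two_ne
              intro h0
              exact hv0 (hvanish v0 h0)
            intro v
            by_cases hv : φ v = 0
            · rw [hv]; exact hvanish v hv
            · have hφv : φ v = 1 := two_ne _ hv
              have hsum : φ (v + v0) = 0 := by rw [map_add, hφv, hφv0]; decide
              have hψsum : ψ (v + v0) = 0 := hvanish _ hsum
              rw [map_add, hψv0] at hψsum
              rw [hφv]
              revert hψsum
              generalize ψ v = a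
              revert a; decide
          have hds : d = s := by
            funext i
            have h1 := dotL_single n d i
            have h2 := dotL_single n s i
            rw [← hψ] at h1; rw [← hφ] at h2
            rw [← h1, ← h2, hψφ]
          have hx' : x' = x + s := by
            have hxs : x - x' = s := by rw [← hd, hds]
            funext i
            have : x i - x' i = s i := congrFun hxs i
            have h2 : ∀ a c e : ZMod 2, a - c = e → c = a + e := by decide
            exact h2 _ _ _ this
          rw [hx']
          exact hper x
    have := hk.2 hmem
    omega
  · intro hkn
    obtain ⟨z, hz, hconst⟩ := hk.1
    set L : (Fin n → ZMod 2) →ₗ[ZMod 2] (Fin k → ZMod 2) :=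
      LinearMap.pi (fun j => dotL n (z j)) with hL
    have hnotinj : ¬ Function.Injective L := by
      intro hinj
      have := LinearMap.finrank_le_finrank_of_injective hinj
      simp [Module.finrank_fintype_fun_eq_card] at this
      omega
    rw [injective_iff_map_eq_zero] at hnotinj
    push_neg at hnotinj
    obtain ⟨s, hs0, hsne⟩ := hnotinj
    refine ⟨s, hsne, fun x => hconst x (x + s) fun j => ?_⟩
    have hLs : ∑ i, s i * z j i = 0 := congrFun hs0 j
    simp only [Pi.add_apply, add_mul, Finset.sum_add_distrib, hLs, add_zero]
end

section
/- Let 0 < ε ≤ 1 and let nonnegative reals a_c, b_c, for c in an index set of size 2^k, satisfy a_c + b_c = N/2^k for all c and Σ_c (a_c² + b_c²) ≥ (1 − ε²/2)·N²/2^k. Then Σ_c min(a_c, b_c) ≤ ε N. -/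
/-- If nonnegative reals `a_c, b_c` (for `c` in an index set of size `2^k`) satisfy
`a_c + b_c = N/2^k` for all `c` and `Σ_c (a_c² + b_c²) ≥ (1 − ε²/2)·N²/2^k`, with
`0 < ε ≤ 1`, then `Σ_c min(a_c, b_c) ≤ ε N`. -/
theorem approx_case (k : ℕ) (N ε : ℝ) (hε : 0 < ε) (hε1 : ε ≤ 1)
    (a b : Fin (2 ^ k) → ℝ) (ha : ∀ c, 0 ≤ a c) (hb : ∀ c, 0 ≤ b c)
    (hsum : ∀ c, a c + b c = N / 2 ^ k)
    (hsq : ∑ c, (a c ^ 2 + b c ^ 2) ≥ (1 - ε ^ 2 / 2) * N ^ 2 / 2 ^ k) :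
    ∑ c, min (a c) (b c) ≤ ε * N := by
  have h2k : (0:ℝ) < 2 ^ k := by positivity
  have hNE : (0:Fin (2^k)) = 0 := rfl
  have hN : 0 ≤ N := by
    have h0 := hsum ⟨0, pow_pos (by norm_num) k⟩
    have := add_nonneg (ha ⟨0, pow_pos (by norm_num) k⟩)
      (hb ⟨0, pow_pos (by norm_num) k⟩)
    rw [h0, le_div_iff₀ h2k] at this
    linarith
  -- sum of products bound
  have hab : ∑ c, a c * b c ≤ ε ^ 2 / 4 * N ^ 2 / 2 ^ k := by
    have key : ∑ c, (a c ^ 2 + b c ^ 2) = N ^ 2 / 2 ^ k - 2 * ∑ c, a c * b c := by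
      have : ∀ c : Fin (2^k), a c ^ 2 + b c ^ 2 = (N / 2 ^ k) ^ 2 - 2 * (a c * b c) := by
        intro c
        rw [← hsum c]; ring
      rw [Finset.sum_congr rfl fun c _ => this c, Finset.sum_sub_distrib,
        Finset.sum_const, ← Finset.mul_sum]
      simp [Finset.card_univ]
      field_simp
    rw [key] at hsq
    ring_nf at hsq ⊢
    linarith
  -- min ≤ sqrt (a*b)
  have hmin : ∀ c, min (a c) (b c) ≤ Real.sqrt (a c * b c) := by
    intro c
    have hm : 0 ≤ min (a c) (b c) := le_min (ha c) (hb c)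
    apply Real.le_sqrt_of_sq_le
    nlinarith [min_le_left (a c) (b c), min_le_right (a c) (b c), ha c, hb c]
  have hS1 : ∑ c, min (a c) (b c) ≤ ∑ c, Real.sqrt (a c * b c) :=
    Finset.sum_le_sum fun c _ => hmin c
  have hCS : (∑ c, Real.sqrt (a c * b c)) ^ 2 ≤ 2 ^ k * ∑ c, a c * b c := by
    have := sq_sum_le_card_mul_sum_sq (s := Finset.univ)
      (f := fun c => Real.sqrt (a c * b c))
    simp only [Finset.card_univ, Fintype.card_fin] at this
    calc (∑ c, Real.sqrt (a c * b c)) ^ 2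
        ≤ (2 ^ k : ℕ) * ∑ c, Real.sqrt (a c * b c) ^ 2 := this
      _ = 2 ^ k * ∑ c, a c * b c := by
          push_cast
          congr 1
          exact Finset.sum_congr rfl fun c _ =>
            Real.sq_sqrt (mul_nonneg (ha c) (hb c))
  have hsqrt_nonneg : 0 ≤ ∑ c, Real.sqrt (a c * b c) :=
    Finset.sum_nonneg fun c _ => Real.sqrt_nonneg _
  have hS2 : (∑ c, Real.sqrt (a c * b c)) ^ 2 ≤ (ε * N / 2) ^ 2 := by
    calc (∑ c, Real.sqrt (a c * b c)) ^ 2 ≤ 2 ^ k * ∑ c, a c * b c := hCS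
      _ ≤ 2 ^ k * (ε ^ 2 / 4 * N ^ 2 / 2 ^ k) := by
          exact mul_le_mul_of_nonneg_left hab (le_of_lt h2k)
      _ = (ε * N / 2) ^ 2 := by field_simp; ring
  have hS3 : ∑ c, Real.sqrt (a c * b c) ≤ ε * N / 2 := by
    have h2 : 0 ≤ ε * N / 2 := by positivity
    nlinarith
  nlinarith [hS1, hS3]
end
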